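/- Let Φ be moderate with constant K. Let (Ω, 𝒜, μ) be a measure space and let f and g be nonnegative measurable functions on Ω. Suppose δ > 1, 0 < ε < 1 and 0 < γ < 1 are real numbers such that μ{g > δλ and f ≤ ελ} ≤ γ·μ{g > λ} for every λ > 0. Let ρ and ν be real numbers satisfying Φ(δλ) ≤ ρ·Φ(λ) and Φ(ε⁻¹λ) ≤ ν·Φ(λ) for every λ > 0. If ρ·γ < 1 and ∫_Ω Φ(min{1, g}) dμ < ∞, then ∫_Ω Φ(g) dμ ≤ (ρν/(1−ργ)) · ∫_Ω Φ(f) dμ. -/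

import Mathlib

/-!
By the layer-cake formula `∫ Φ(h) = ∫₀^∞ μ{Φ(h) > t} dt`, and for `t > 0` the level set
`{Φ(h) > t}` equals `{h > λ}` for a threshold `λ > 0` depending only on `t`. Splitting `{g > δλ}`
along `f ≤ ελ` and using the good-λ hypothesis gives
`∫ Φ(g) ≤ ρ ∫ Φ(g/δ) ≤ ρ (γ ∫ Φ(g) + ν ∫ Φ(f))`. Absorbing `ργ ∫ Φ(g)` into the left side
needs `∫ Φ(g) < ∞`; this holds for the truncations `min (2ⁿ) g` by the doubling condition and
`∫ Φ(min 1 g) < ∞`, and monotone convergence removes the truncation.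
-/

open MeasureTheory ENNReal NNReal

/-- `Φ : [0,∞) → [0,∞)` is moderate with constant `K`: continuous, nondecreasing,
`Φ(0) = 0` and `Φ(2λ) ≤ K Φ(λ)` for all `λ ≥ 0`. -/
def Moderate (K : ℝ) (Φ : ℝ → ℝ) : Prop :=
  ContinuousOn Φ (Set.Ici 0) ∧ MonotoneOn Φ (Set.Ici 0) ∧ Φ 0 = 0 ∧
    ∀ x : ℝ, 0 ≤ x → Φ (2 * x) ≤ K * Φ x

open Set Filter Topology

section

variable {Ω : Type*} [MeasurableSpace Ω] {Φ : ℝ → ℝ}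

lemma MonotoneOn.nonneg_of_map_zero (hmono : MonotoneOn Φ (Ici 0)) (h0 : Φ 0 = 0) {x : ℝ}
    (hx : 0 ≤ x) : 0 ≤ Φ x := by
  simpa [h0] using hmono self_mem_Ici hx hx

lemma ContinuousOn.measurable_comp_of_nonneg (hcont : ContinuousOn Φ (Ici 0)) {h : Ω → ℝ}
    (hh : Measurable h) (h0 : ∀ ω, 0 ≤ h ω) :
    Measurable fun ω => Φ (h ω) := by
  have : Continuous fun x => Φ (max x 0) :=
    hcont.comp_continuous (continuous_id.max continuous_const) fun x => le_max_right x 0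
  simpa [Function.comp_def, max_eq_left (h0 _)] using this.measurable.comp hh

lemma ofReal_comp_mul_le (hmono : MonotoneOn Φ (Ici 0)) (h0 : Φ 0 = 0) {c r : ℝ}
    (h : ∀ lam : ℝ, 0 < lam → Φ (c * lam) ≤ r * Φ lam) {x : ℝ} (hx : 0 ≤ x) :
    ENNReal.ofReal (Φ (c * x)) ≤ ENNReal.ofReal r * ENNReal.ofReal (Φ x) := by
  rcases hx.eq_or_lt with rfl | hx
  · simp [h0]
  · rw [← ofReal_mul' (hmono.nonneg_of_map_zero h0 hx.le)]
    exact ofReal_le_ofReal (h x hx)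

/-- The threshold `λ = max {x ≥ 0 | Φ x ≤ t}`. -/
lemma exists_pos_forall_lt_comp_iff (hcont : ContinuousOn Φ (Ici 0))
    (hmono : MonotoneOn Φ (Ici 0)) (h0 : Φ 0 = 0) {t x₁ : ℝ} (ht : 0 < t) (hx₁ : 0 ≤ x₁)
    (htx₁ : t < Φ x₁) : ∃ lam, 0 < lam ∧ ∀ x, 0 ≤ x → (t < Φ x ↔ lam < x) := by
  set S := Ici 0 ∩ Φ ⁻¹' Iic t
  have hS : IsClosed S := hcont.preimage_isClosed_of_isClosed isClosed_Ici isClosed_Iic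
  have hSbdd : BddAbove S := ⟨x₁, fun x hx =>
    (hmono.reflect_lt hx.1 hx₁ ((show Φ x ≤ t from hx.2).trans_lt htx₁)).le⟩
  have hsmall : ∀ᶠ x in 𝓝[>] 0, Φ x < t :=
    ((hcont 0 self_mem_Ici).mono Ioi_subset_Ici_self).eventually (gt_mem_nhds (by rwa [h0]))
  obtain ⟨x, hxt, hx⟩ := (hsmall.and self_mem_nhdsWithin).exists
  have hmem : sSup S ∈ S := hS.csSup_mem ⟨x, mem_Ici.2 hx.le, hxt.le⟩ hSbdd
  refine ⟨sSup S, hx.trans_le (le_csSup hSbdd ⟨mem_Ici.2 hx.le, hxt.le⟩), fun y hy => ?_⟩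
  constructor
  · intro hty
    by_contra! hyS
    exact (hmono hy hmem.1 hyS).not_gt (hmem.2.trans_lt hty)
  · intro hSy
    by_contra! hyt
    exact (le_csSup hSbdd ⟨hy, hyt⟩).not_gt hSy

lemma lintegral_ofReal_comp_eq_lintegral_meas_lt
    (hcont : ContinuousOn Φ (Ici 0)) (hmono : MonotoneOn Φ (Ici 0)) (h0 : Φ 0 = 0)
    (μ : Measure Ω) {h : Ω → ℝ} (hh : Measurable h) (hh0 : ∀ ω, 0 ≤ h ω) :
    ∫⁻ ω, ENNReal.ofReal (Φ (h ω)) ∂μ = ∫⁻ t in Ioi 0, μ {ω | t < Φ (h ω)} :=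
  lintegral_eq_lintegral_meas_lt μ
    (Eventually.of_forall fun ω => hmono.nonneg_of_map_zero h0 (hh0 ω))
    (hcont.measurable_comp_of_nonneg hh hh0).aemeasurable

lemma lintegral_ofReal_comp_eq_iSup_min_two_pow
    (hcont : ContinuousOn Φ (Ici 0)) (hmono : MonotoneOn Φ (Ici 0)) (μ : Measure Ω)
    {g : Ω → ℝ} (hg : Measurable g) (hg0 : ∀ ω, 0 ≤ g ω) :
    ∫⁻ ω, ENNReal.ofReal (Φ (g ω)) ∂μ =
      ⨆ n : ℕ, ∫⁻ ω, ENNReal.ofReal (Φ (min (2 ^ n) (g ω))) ∂μ := by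
  have hmin0 : ∀ (n : ℕ) ω, 0 ≤ min (2 ^ n : ℝ) (g ω) := fun n ω =>
    le_min (by positivity) (hg0 ω)
  rw [← lintegral_iSup]
  · refine lintegral_congr fun ω => le_antisymm ?_ ?_
    · obtain ⟨n, hn⟩ := pow_unbounded_of_one_lt (g ω) one_lt_two
      exact le_iSup_of_le n (by rw [min_eq_right hn.le])
    · exact iSup_le fun n => ofReal_le_ofReal (hmono (hmin0 n ω) (hg0 ω) (min_le_right _ _))
  · exact fun n => ENNReal.measurable_ofReal.comp
      (hcont.measurable_comp_of_nonneg (measurable_const.min hg) (hmin0 n))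
  · exact fun i j hij ω => ofReal_le_ofReal (hmono (hmin0 i ω) (hmin0 j ω)
      (min_le_min_right _ (pow_le_pow_right₀ one_le_two hij)))

lemma lintegral_ofReal_comp_eq_zero_of_nonpos
    (hmono : MonotoneOn Φ (Ici 0)) (h0 : Φ 0 = 0) (μ : Measure Ω) {g : Ω → ℝ}
    (hg0 : ∀ ω, 0 ≤ g ω) {c r : ℝ} (hc : 0 < c) (hr : r ≤ 0)
    (h : ∀ lam : ℝ, 0 < lam → Φ (c * lam) ≤ r * Φ lam) :
    ∫⁻ ω, ENNReal.ofReal (Φ (g ω)) ∂μ = 0 := by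
  have hzero : ∀ ω, ENNReal.ofReal (Φ (g ω)) = 0 := fun ω => by
    have := ofReal_comp_mul_le hmono h0 h (x := c⁻¹ * g ω) (by have := hg0 ω; positivity)
    rwa [mul_inv_cancel_left₀ hc.ne', ofReal_of_nonpos hr, zero_mul, nonpos_iff_eq_zero] at this
  simp [hzero]

def GoodLambda (μ : Measure Ω) (f g : Ω → ℝ) (δ ε γ : ℝ) : Prop :=
  ∀ lam : ℝ, 0 < lam →
    μ {ω | δ * lam < g ω ∧ f ω ≤ ε * lam} ≤ ENNReal.ofReal γ * μ {ω | lam < g ω}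

section GoodLambda

variable {μ : Measure Ω} {f g : Ω → ℝ} {δ ε γ : ℝ}

lemma GoodLambda.min_left (hg : GoodLambda μ f g δ ε γ) (hδ : 1 ≤ δ) (c : ℝ) :
    GoodLambda μ f (fun ω => min c (g ω)) δ ε γ := by
  intro lam hlam
  rcases le_or_gt c (δ * lam) with hc | hc
  · have hempty : {ω | δ * lam < min c (g ω) ∧ f ω ≤ ε * lam} = ∅ :=
      eq_empty_of_forall_notMem fun ω hω => hc.not_gt (hω.1.trans_le (min_le_left _ _))
    rw [hempty, measure_empty]
    exact zero_le
  · have hlc : lam < c := (le_mul_of_one_le_left hlam.le hδ).trans_lt hc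
    simpa only [lt_min_iff, hc, hlc, true_and] using hg lam hlam

lemma GoodLambda.measure_lt_comp_inv_mul_le (hgood : GoodLambda μ f g δ ε γ)
    (hcont : ContinuousOn Φ (Ici 0)) (hmono : MonotoneOn Φ (Ici 0)) (h0 : Φ 0 = 0)
    (hf0 : ∀ ω, 0 ≤ f ω) (hg0 : ∀ ω, 0 ≤ g ω) (hδ : 0 < δ) (hε : 0 < ε) {t : ℝ}
    (ht : 0 < t) :
    μ {ω | t < Φ (δ⁻¹ * g ω)} ≤
      ENNReal.ofReal γ * μ {ω | t < Φ (g ω)} + μ {ω | t < Φ (ε⁻¹ * f ω)} := by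
  by_cases hbdd : ∀ x, 0 ≤ x → Φ x ≤ t
  · have hempty : {ω | t < Φ (δ⁻¹ * g ω)} = ∅ := eq_empty_of_forall_notMem fun ω hω =>
      (hbdd _ (by have := hg0 ω; positivity)).not_gt hω
    simp [hempty]
  push Not at hbdd
  obtain ⟨x₁, hx₁, htx₁⟩ := hbdd
  obtain ⟨lam, hlam, hiff⟩ := exists_pos_forall_lt_comp_iff hcont hmono h0 ht hx₁ htx₁
  have hlevel : ∀ {c : ℝ} {h : Ω → ℝ}, 0 < c → (∀ ω, 0 ≤ h ω) →
      {ω | t < Φ (c⁻¹ * h ω)} = {ω | c * lam < h ω} := fun hc hh0 => by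
    ext ω
    rw [mem_ofPred_eq, mem_ofPred_eq, hiff _ (by have := hh0 ω; positivity), lt_inv_mul_iff₀ hc]
  have hlevel_g : {ω | t < Φ (g ω)} = {ω | lam < g ω} := by
    simpa using hlevel one_pos hg0
  rw [hlevel hδ hg0, hlevel hε hf0, hlevel_g]
  calc μ {ω | δ * lam < g ω}
      ≤ μ ({ω | δ * lam < g ω ∧ f ω ≤ ε * lam} ∪ {ω | ε * lam < f ω}) :=
        measure_mono fun ω hω => (le_or_gt (f ω) (ε * lam)).imp (fun hf => ⟨hω, hf⟩) id
    _ ≤ μ {ω | δ * lam < g ω ∧ f ω ≤ ε * lam} + μ {ω | ε * lam < f ω} :=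
        measure_union_le _ _
    _ ≤ ENNReal.ofReal γ * μ {ω | lam < g ω} + μ {ω | ε * lam < f ω} := by
        gcongr
        exact hgood lam hlam

lemma GoodLambda.lintegral_le (hgood : GoodLambda μ f g δ ε γ)
    (hcont : ContinuousOn Φ (Ici 0)) (hmono : MonotoneOn Φ (Ici 0)) (h0 : Φ 0 = 0)
    (hf : Measurable f) (hg : Measurable g) (hf0 : ∀ ω, 0 ≤ f ω) (hg0 : ∀ ω, 0 ≤ g ω)
    (hδ : 0 < δ) (hε : 0 < ε) {ρ ν : ℝ} (hρ : ∀ lam : ℝ, 0 < lam → Φ (δ * lam) ≤ ρ * Φ lam)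
    (hν : ∀ lam : ℝ, 0 < lam → Φ (ε⁻¹ * lam) ≤ ν * Φ lam) :
    ∫⁻ ω, ENNReal.ofReal (Φ (g ω)) ∂μ ≤
      ENNReal.ofReal ρ * (ENNReal.ofReal γ * ∫⁻ ω, ENNReal.ofReal (Φ (g ω)) ∂μ +
        ENNReal.ofReal ν * ∫⁻ ω, ENNReal.ofReal (Φ (f ω)) ∂μ) := by
  have hscale0 : ∀ {c : ℝ} {h : Ω → ℝ}, 0 < c → (∀ ω, 0 ≤ h ω) → ∀ ω, 0 ≤ c * h ω :=
    fun hc hh0 ω => mul_nonneg hc.le (hh0 ω)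
  have hlevel_meas : Measurable fun t : ℝ => μ {ω | t < Φ (g ω)} :=
    Antitone.measurable fun s t hst => measure_mono fun ω hω => hst.trans_lt hω
  have hlayer := fun {h : Ω → ℝ} (hh : Measurable h) (hh0 : ∀ ω, 0 ≤ h ω) =>
    lintegral_ofReal_comp_eq_lintegral_meas_lt hcont hmono h0 μ hh hh0
  calc ∫⁻ ω, ENNReal.ofReal (Φ (g ω)) ∂μ
      = ∫⁻ ω, ENNReal.ofReal (Φ (δ * (δ⁻¹ * g ω))) ∂μ := by
        simp only [mul_inv_cancel_left₀ hδ.ne']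
    _ ≤ ∫⁻ ω, ENNReal.ofReal ρ * ENNReal.ofReal (Φ (δ⁻¹ * g ω)) ∂μ :=
        lintegral_mono fun ω =>
          ofReal_comp_mul_le hmono h0 hρ (hscale0 (inv_pos.2 hδ) hg0 ω)
    _ = ENNReal.ofReal ρ * ∫⁻ t in Ioi 0, μ {ω | t < Φ (δ⁻¹ * g ω)} := by
        rw [lintegral_const_mul' _ _ ofReal_ne_top,
          hlayer (hg.const_mul _) (hscale0 (inv_pos.2 hδ) hg0)]
    _ ≤ ENNReal.ofReal ρ * ∫⁻ t in Ioi 0,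
          (ENNReal.ofReal γ * μ {ω | t < Φ (g ω)} + μ {ω | t < Φ (ε⁻¹ * f ω)}) := by
        refine mul_le_mul_right (setLIntegral_mono' measurableSet_Ioi fun t ht => ?_) _
        exact hgood.measure_lt_comp_inv_mul_le hcont hmono h0 hf0 hg0 hδ hε (mem_Ioi.1 ht)
    _ = ENNReal.ofReal ρ * (ENNReal.ofReal γ * ∫⁻ ω, ENNReal.ofReal (Φ (g ω)) ∂μ +
          ∫⁻ ω, ENNReal.ofReal (Φ (ε⁻¹ * f ω)) ∂μ) := by
        rw [lintegral_add_left (hlevel_meas.const_mul _), lintegral_const_mul _ hlevel_meas,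
          hlayer hg hg0, hlayer (hf.const_mul _) (hscale0 (inv_pos.2 hε) hf0)]
    _ ≤ ENNReal.ofReal ρ * (ENNReal.ofReal γ * ∫⁻ ω, ENNReal.ofReal (Φ (g ω)) ∂μ +
          ENNReal.ofReal ν * ∫⁻ ω, ENNReal.ofReal (Φ (f ω)) ∂μ) := by
        gcongr
        exact (lintegral_mono fun ω => ofReal_comp_mul_le hmono h0 hν (hf0 ω)).trans_eq
          (lintegral_const_mul' _ _ ofReal_ne_top)

end GoodLambda

lemma Moderate.ofReal_comp_min_two_pow_le {K : ℝ} (hΦ : Moderate K Φ) (n : ℕ)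
    {x : ℝ} (hx : 0 ≤ x) :
    ENNReal.ofReal (Φ (min (2 ^ n) x)) ≤
      ENNReal.ofReal K ^ n * ENNReal.ofReal (Φ (min 1 x)) := by
  obtain ⟨-, hmono, h0, hdouble⟩ := hΦ
  induction n with
  | zero => simp
  | succ n ih =>
    have hmin0 : 0 ≤ min (2 ^ n : ℝ) x := le_min (by positivity) hx
    have hmin_le : min (2 ^ (n + 1) : ℝ) x ≤ 2 * min (2 ^ n) x := by
      rw [mul_min_of_nonneg _ _ zero_le_two, pow_succ']
      exact min_le_min le_rfl (by linarith)
    calc ENNReal.ofReal (Φ (min (2 ^ (n + 1)) x))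
        ≤ ENNReal.ofReal (Φ (2 * min (2 ^ n) x)) :=
          ofReal_le_ofReal
            (hmono (le_min (by positivity) hx) (mul_nonneg zero_le_two hmin0) hmin_le)
      _ ≤ ENNReal.ofReal K * ENNReal.ofReal (Φ (min (2 ^ n) x)) := by
          rw [← ofReal_mul' (hmono.nonneg_of_map_zero h0 hmin0)]
          exact ofReal_le_ofReal (hdouble _ hmin0)
      _ ≤ ENNReal.ofReal K * (ENNReal.ofReal K ^ n * ENNReal.ofReal (Φ (min 1 x))) := by
          gcongr
      _ = ENNReal.ofReal K ^ (n + 1) * ENNReal.ofReal (Φ (min 1 x)) := by ring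

lemma Moderate.lintegral_comp_min_two_pow_lt_top {K : ℝ} (hΦ : Moderate K Φ)
    {μ : Measure Ω} {g : Ω → ℝ} (hg0 : ∀ ω, 0 ≤ g ω)
    (hfin : ∫⁻ ω, ENNReal.ofReal (Φ (min 1 (g ω))) ∂μ < ∞) (n : ℕ) :
    ∫⁻ ω, ENNReal.ofReal (Φ (min (2 ^ n) (g ω))) ∂μ < ∞ :=
  calc ∫⁻ ω, ENNReal.ofReal (Φ (min (2 ^ n) (g ω))) ∂μ
      ≤ ∫⁻ ω, ENNReal.ofReal K ^ n * ENNReal.ofReal (Φ (min 1 (g ω))) ∂μ :=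
        lintegral_mono fun ω => hΦ.ofReal_comp_min_two_pow_le n (hg0 ω)
    _ = ENNReal.ofReal K ^ n * ∫⁻ ω, ENNReal.ofReal (Φ (min 1 (g ω))) ∂μ :=
        lintegral_const_mul' _ _ (pow_ne_top ofReal_ne_top)
    _ < ∞ := mul_lt_top (pow_lt_top ofReal_lt_top) hfin

lemma le_ofReal_div_one_sub_mul_of_le_add {a b : ℝ≥0∞} {c d : ℝ} (ha : a ≠ ∞)
    (hc0 : 0 ≤ c) (hc1 : c < 1) (hd : 0 < d) (h : a ≤ ENNReal.ofReal c * a + ENNReal.ofReal d * b) :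
    a ≤ ENNReal.ofReal (d / (1 - c)) * b := by
  have hsub : 0 < 1 - c := by linarith
  rcases eq_or_ne b ∞ with rfl | hb
  · rw [mul_top (by simpa using div_pos hd hsub)]
    exact le_top
  rw [← ofReal_toReal ha, ← ofReal_toReal hb, ← ofReal_mul hc0, ← ofReal_mul hd.le,
    ← ofReal_add (by positivity) (by positivity), ofReal_le_ofReal_iff (by positivity)] at h
  rw [← ofReal_toReal ha, ← ofReal_toReal hb, ← ofReal_mul (div_pos hd hsub).le]
  refine ofReal_le_ofReal ?_
  rw [div_mul_eq_mul_div, le_div_iff₀ hsub]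
  nlinarith

end

theorem stmt_11_general (K : ℝ) (Φ : ℝ → ℝ) (hΦ : Moderate K Φ)
    (Ω : Type*) (m0 : MeasurableSpace Ω) (μ : Measure Ω)
    (f g : Ω → ℝ) (hfmeas : Measurable f) (hgmeas : Measurable g)
    (hfnn : ∀ ω, 0 ≤ f ω) (hgnn : ∀ ω, 0 ≤ g ω)
    (δ ε γ : ℝ) (hδ : 1 < δ) (hε0 : 0 < ε) (hγ0 : 0 < γ)
    (hgood : ∀ lam : ℝ, 0 < lam →
      μ {ω | δ * lam < g ω ∧ f ω ≤ ε * lam} ≤ ENNReal.ofReal γ * μ {ω | lam < g ω})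
    (ρ ν : ℝ)
    (hρ : ∀ lam : ℝ, 0 < lam → Φ (δ * lam) ≤ ρ * Φ lam)
    (hν : ∀ lam : ℝ, 0 < lam → Φ (ε⁻¹ * lam) ≤ ν * Φ lam)
    (hργ : ρ * γ < 1)
    (hfin : (∫⁻ ω, ENNReal.ofReal (Φ (min 1 (g ω))) ∂μ) < ∞) :
    (∫⁻ ω, ENNReal.ofReal (Φ (g ω)) ∂μ) ≤
      ENNReal.ofReal (ρ * ν / (1 - ρ * γ)) * ∫⁻ ω, ENNReal.ofReal (Φ (f ω)) ∂μ := by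
  have hfinite := hΦ.lintegral_comp_min_two_pow_lt_top hgnn hfin
  obtain ⟨hcont, hmono, h0, -⟩ := hΦ
  rcases le_or_gt ρ 0 with hρ0 | hρ0
  · rw [lintegral_ofReal_comp_eq_zero_of_nonpos hmono h0 μ hgnn (by linarith) hρ0 hρ]
    exact zero_le
  rcases le_or_gt ν 0 with hν0 | hν0
  · rw [lintegral_ofReal_comp_eq_zero_of_nonpos hmono h0 μ hgnn (inv_pos.2 hε0) hν0 hν]
    exact zero_le
  rw [lintegral_ofReal_comp_eq_iSup_min_two_pow hcont hmono μ hgmeas hgnn]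
  refine iSup_le fun n => le_ofReal_div_one_sub_mul_of_le_add
    (hfinite n).ne (by positivity) hργ (by positivity) ?_
  have hkey := (GoodLambda.min_left hgood hδ.le (2 ^ n)).lintegral_le hcont hmono
    h0 hfmeas (measurable_const.min hgmeas) hfnn (fun ω => le_min (by positivity) (hgnn ω))
    (by linarith) hε0 hρ hν
  rwa [mul_add, ← mul_assoc, ← mul_assoc, ← ofReal_mul hρ0.le, ← ofReal_mul hρ0.le]
    at hkey

/-- the good-λ method: let `Φ` be moderate with constant `K`, and
`f, g` nonnegative measurable functions on a measure space `(Ω, 𝒜, μ)`.  If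
`δ > 1`, `0 < ε < 1`, `0 < γ < 1` satisfy
`μ{g > δλ, f ≤ ελ} ≤ γ μ{g > λ}` for every `λ > 0`, `ρ, ν` satisfy
`Φ(δλ) ≤ ρ Φ(λ)` and `Φ(ε⁻¹ λ) ≤ ν Φ(λ)` for every `λ > 0`, `ργ < 1` and
`∫ Φ(min(1,g)) dμ < ∞`, then `∫ Φ(g) dμ ≤ (ρν/(1-ργ)) ∫ Φ(f) dμ`. -/
theorem stmt_11 (K : ℝ) (Φ : ℝ → ℝ) (hΦ : Moderate K Φ)
    (Ω : Type*) (m0 : MeasurableSpace Ω) (μ : Measure Ω)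
    (f g : Ω → ℝ) (hfmeas : Measurable f) (hgmeas : Measurable g)
    (hfnn : ∀ ω, 0 ≤ f ω) (hgnn : ∀ ω, 0 ≤ g ω)
    (δ ε γ : ℝ) (hδ : 1 < δ) (hε0 : 0 < ε) (hε1 : ε < 1) (hγ0 : 0 < γ) (hγ1 : γ < 1)
    (hgood : ∀ lam : ℝ, 0 < lam →
      μ {ω | δ * lam < g ω ∧ f ω ≤ ε * lam} ≤ ENNReal.ofReal γ * μ {ω | lam < g ω})
    (ρ ν : ℝ)
    (hρ : ∀ lam : ℝ, 0 < lam → Φ (δ * lam) ≤ ρ * Φ lam)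
    (hν : ∀ lam : ℝ, 0 < lam → Φ (ε⁻¹ * lam) ≤ ν * Φ lam)
    (hργ : ρ * γ < 1)
    (hfin : (∫⁻ ω, ENNReal.ofReal (Φ (min 1 (g ω))) ∂μ) < ∞) :
    (∫⁻ ω, ENNReal.ofReal (Φ (g ω)) ∂μ) ≤
      ENNReal.ofReal (ρ * ν / (1 - ρ * γ)) * ∫⁻ ω, ENNReal.ofReal (Φ (f ω)) ∂μ :=
  stmt_11_general K Φ hΦ Ω m0 μ f g hfmeas hgmeas hfnn hgnn δ ε γ hδ hε0 hγ0 hgood ρ ν hρ hν hργ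
    hfin
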